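/- arXiv:2509.18997 — 4 statements merged into one kernel-verified Lean document; each statement's English description precedes it below -/
import Mathlib

section
/- For an unregularized two-layer linear autoencoder, every global minimizer of ||X - W2 W1 X||_F^2 over W1 ∈ R^{k×d}, W2 ∈ R^{d×k} satisfies that W2 W1 is the orthogonal projection onto the span of the top k eigenvectors of XX^T, provided the k-th and (k+1)-th eigenvalues of XX^T are distinct. -/
open Matrix

/-- Squared Frobenius norm of a real matrix. -/
noncomputable def frobSq {m n : ℕ} (M : Matrix (Fin m) (Fin n) ℝ) : ℝ :=
  ∑ i, ∑ j, (M i j) ^ 2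

/-- `B` satisfies the four Moore–Penrose conditions for `A`. -/
def IsMoorePenroseInv {m n : ℕ} (A : Matrix (Fin m) (Fin n) ℝ)
    (B : Matrix (Fin n) (Fin m) ℝ) : Prop :=
  A * B * A = A ∧ B * A * B = B ∧ (A * B)ᵀ = A * B ∧ (B * A)ᵀ = B * A

/-- `P` is a best rank-`k` approximation of `X` in Frobenius norm. -/
noncomputable def IsBestRankApprox {m n : ℕ} (k : ℕ) (X P : Matrix (Fin m) (Fin n) ℝ) : Prop :=
  P.rank ≤ k ∧ ∀ Q : Matrix (Fin m) (Fin n) ℝ, Q.rank ≤ k → frobSq (X - P) ≤ frobSq (X - Q)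

/-!
Write `B = W₂W₁` and let `P` be the orthogonal projection onto a `(d - k)`-dimensional subspace
of `ker W₂ᵀ`, so that `PB = 0` and, by Pythagoras, `‖(1 - B)X‖² = ‖PX‖² + ‖(1 - P)(1 - B)X‖²`.
In the eigenbasis `‖PX‖² = ∑ μᵢ tᵢ` with `tᵢ = ‖P uᵢ‖² ∈ [0, 1]` and `∑ tᵢ = d - k`; because of
the eigengap this is at least `∑_{i ≥ k} μᵢ`, with equality only when `tᵢ = 𝟙[i ≥ k]`. The
projection `Π` onto the top `k` eigenvectors (`topProj`) is a competitor attaining `∑_{i ≥ k} μᵢ`,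
so minimality forces `1 - P = Π` and `(1 - P)(1 - B)X = 0`. Since `X` has full row rank,
`(1 - P)(1 - B) = 0`, that is `B = (1 - P)B = 1 - P = Π`.
-/

section Frobenius

variable {m n : ℕ}

theorem frobSq_eq_trace (A : Matrix (Fin m) (Fin n) ℝ) : frobSq A = trace (A * Aᵀ) := by
  simp [frobSq, trace, mul_apply, sq]

theorem frobSq_nonneg (A : Matrix (Fin m) (Fin n) ℝ) : 0 ≤ frobSq A :=
  Finset.sum_nonneg fun _ _ => Finset.sum_nonneg fun _ _ => sq_nonneg _

theorem frobSq_eq_zero_iff {A : Matrix (Fin m) (Fin n) ℝ} : frobSq A = 0 ↔ A = 0 := by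
  rw [frobSq_eq_trace, ← conjTranspose_eq_transpose_of_trivial,
    trace_mul_conjTranspose_self_eq_zero_iff]

end Frobenius

theorem eq_zero_of_mul_eq_zero_of_rank_eq {l m n : ℕ} {Z : Matrix (Fin l) (Fin m) ℝ}
    {X : Matrix (Fin m) (Fin n) ℝ} (hX : X.rank = m) (h : Z * X = 0) : Z = 0 := by
  have hZ := rank_add_rank_le_card_of_mul_eq_zero h
  rw [hX, Fintype.card_fin] at hZ
  have hZ0 : Z.rank = 0 := by omega
  rw [Matrix.rank, Submodule.finrank_eq_zero, LinearMap.range_eq_bot] at hZ0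
  exact Matrix.toLin'.injective (by rw [Matrix.toLin'_apply', hZ0, map_zero])

theorem exists_orthonormal_mulVec_eq_zero {k d : ℕ} (A : Matrix (Fin k) (Fin d) ℝ) :
    ∃ v : Fin (d - k) → Fin d → ℝ,
      (∀ i j, v i ⬝ᵥ v j = if i = j then 1 else 0) ∧ ∀ i, A *ᵥ v i = 0 := by
  have hK : d - k ≤ Module.finrank ℝ (LinearMap.ker (toEuclideanLin A)) := by
    have h := LinearMap.finrank_range_add_finrank_ker (toEuclideanLin A)
    have := Submodule.finrank_le (LinearMap.range (toEuclideanLin A))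
    simp only [finrank_euclideanSpace_fin] at h this
    omega
  let b := stdOrthonormalBasis ℝ (LinearMap.ker (toEuclideanLin A))
  refine ⟨fun i => WithLp.ofLp (b (Fin.castLE hK i) : EuclideanSpace ℝ (Fin d)),
    fun i j => ?_, fun i => ?_⟩
  · have h := orthonormal_iff_ite.mp b.orthonormal (Fin.castLE hK i) (Fin.castLE hK j)
    rw [Submodule.coe_inner, EuclideanSpace.inner_eq_star_dotProduct, star_trivial,
      dotProduct_comm] at h
    simpa only [Fin.castLE_inj] using h
  · have h := (b (Fin.castLE hK i)).2
    rw [LinearMap.mem_ker, toLpLin_apply] at h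
    exact congrArg WithLp.ofLp h

section SymmetricIdempotent

variable {n : Type*} [Fintype n] {R : Matrix n n ℝ}

theorem dotProduct_mulVec_self_of_isSymm_of_isIdempotentElem (hR : R.IsSymm)
    (hR' : IsIdempotentElem R) (x : n → ℝ) : (R *ᵥ x) ⬝ᵥ (R *ᵥ x) = x ⬝ᵥ (R *ᵥ x) := by
  have h := dotProduct_mulVec x Rᵀ (R *ᵥ x)
  rwa [vecMul_transpose, hR.eq, mulVec_mulVec, hR'.eq, eq_comm] at h

theorem dotProduct_self_eq_add_of_isSymm_of_isIdempotentElem [DecidableEq n] (hR : R.IsSymm)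
    (hR' : IsIdempotentElem R) (x : n → ℝ) :
    x ⬝ᵥ x = (R *ᵥ x) ⬝ᵥ (R *ᵥ x) + ((1 - R) *ᵥ x) ⬝ᵥ ((1 - R) *ᵥ x) := by
  rw [dotProduct_mulVec_self_of_isSymm_of_isIdempotentElem hR hR',
    dotProduct_mulVec_self_of_isSymm_of_isIdempotentElem (isSymm_one.sub hR) hR'.one_sub,
    ← dotProduct_add, ← add_mulVec, add_sub_cancel, one_mulVec]

theorem frobSq_mul_of_isSymm_of_isIdempotentElem {m : ℕ} {R : Matrix (Fin m) (Fin m) ℝ}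
    (hR : R.IsSymm) (hR' : IsIdempotentElem R) {p : ℕ} (Z : Matrix (Fin m) (Fin p) ℝ) :
    frobSq (R * Z) = trace (R * (Z * Zᵀ)) := by
  rw [frobSq_eq_trace, transpose_mul, hR.eq, trace_mul_comm, Matrix.mul_assoc,
    ← Matrix.mul_assoc R R, hR'.eq, trace_mul_comm, Matrix.mul_assoc]

theorem frobSq_eq_add_of_isSymm_of_isIdempotentElem {m : ℕ} {R : Matrix (Fin m) (Fin m) ℝ}
    (hR : R.IsSymm) (hR' : IsIdempotentElem R) {p : ℕ} (Z : Matrix (Fin m) (Fin p) ℝ) :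
    frobSq Z = frobSq (R * Z) + frobSq ((1 - R) * Z) := by
  rw [frobSq_mul_of_isSymm_of_isIdempotentElem hR hR',
    frobSq_mul_of_isSymm_of_isIdempotentElem (isSymm_one.sub hR) hR'.one_sub, ← trace_add,
    ← Matrix.add_mul, add_sub_cancel, Matrix.one_mul, frobSq_eq_trace]

end SymmetricIdempotent

section OrthoProj

variable {ι n : Type*} [Fintype ι] {v : ι → n → ℝ}

def orthoProj (v : ι → n → ℝ) : Matrix n n ℝ := ∑ i, vecMulVec (v i) (v i)

theorem orthoProj_eq_transpose_mul (v : ι → n → ℝ) : orthoProj v = (of v)ᵀ * of v := by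
  ext a b
  simp [orthoProj, mul_apply, Matrix.sum_apply, vecMulVec_apply]

theorem isSymm_orthoProj (v : ι → n → ℝ) : (orthoProj v).IsSymm := by
  simp [orthoProj_eq_transpose_mul, IsSymm]

theorem orthoProj_mulVec [Fintype n] (v : ι → n → ℝ) (w : n → ℝ) :
    orthoProj v *ᵥ w = ∑ i, (v i ⬝ᵥ w) • v i := by
  simp [orthoProj, sum_mulVec, vecMulVec_mulVec]

theorem orthoProj_mulVec_self [Fintype n] [DecidableEq ι]
    (hv : ∀ i j, v i ⬝ᵥ v j = if i = j then 1 else 0) (j : ι) : orthoProj v *ᵥ v j = v j := by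
  simp [orthoProj_mulVec, hv]

theorem orthoProj_mulVec_eq_zero [Fintype n] {w : n → ℝ} (h : ∀ i, v i ⬝ᵥ w = 0) :
    orthoProj v *ᵥ w = 0 := by
  simp [orthoProj_mulVec, h]

theorem isIdempotentElem_orthoProj [Fintype n] [DecidableEq ι]
    (hv : ∀ i j, v i ⬝ᵥ v j = if i = j then 1 else 0) : IsIdempotentElem (orthoProj v) := by
  unfold IsIdempotentElem
  nth_rewrite 2 [orthoProj]
  simp only [Matrix.mul_sum, mul_vecMulVec, orthoProj_mulVec_self hv]
  rfl

theorem trace_orthoProj [Fintype n] [DecidableEq ι]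
    (hv : ∀ i j, v i ⬝ᵥ v j = if i = j then 1 else 0) :
    trace (orthoProj v) = Fintype.card ι := by
  simp [orthoProj, trace_sum, trace_vecMulVec, hv]

theorem orthoProj_mul_eq_zero [Fintype n] {m : Type*} {A : Matrix n m ℝ}
    (h : ∀ i, Aᵀ *ᵥ v i = 0) : orthoProj v * A = 0 := by
  have h' (i : ι) : v i ᵥ* A = 0 := by rw [← transpose_transpose A, vecMul_transpose, h]
  ext a b
  simp [orthoProj, Matrix.sum_mul, vecMulVec_mul, h', Matrix.sum_apply, vecMulVec_apply]

end OrthoProj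

section OrthonormalBasis

variable {n : Type*} [Fintype n] [DecidableEq n] {u : n → n → ℝ}

theorem orthoProj_eq_one (hu : ∀ i j, u i ⬝ᵥ u j = if i = j then 1 else 0) :
    orthoProj u = 1 := by
  have h : of u * (of u)ᵀ = 1 := by
    ext i j
    rw [mul_apply', one_apply, ← hu]
    rfl
  rw [orthoProj_eq_transpose_mul, mul_eq_one_comm.mp h]

theorem eq_sum_vecMulVec_mulVec (hu : ∀ i j, u i ⬝ᵥ u j = if i = j then 1 else 0)
    {m : Type*} (A : Matrix m n ℝ) : A = ∑ i, vecMulVec (A *ᵥ u i) (u i) := by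
  conv_lhs => rw [← Matrix.mul_one A, ← orthoProj_eq_one hu, orthoProj]
  simp [Matrix.mul_sum, mul_vecMulVec]

theorem ext_of_mulVec_orthonormal (hu : ∀ i j, u i ⬝ᵥ u j = if i = j then 1 else 0)
    {m : Type*} {A B : Matrix m n ℝ} (h : ∀ i, A *ᵥ u i = B *ᵥ u i) : A = B := by
  rw [eq_sum_vecMulVec_mulVec hu A, eq_sum_vecMulVec_mulVec hu B]
  simp only [h]

theorem sum_dotProduct_mulVec_eq_trace (hu : ∀ i j, u i ⬝ᵥ u j = if i = j then 1 else 0)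
    (A : Matrix n n ℝ) : ∑ i, u i ⬝ᵥ (A *ᵥ u i) = trace A := by
  conv_rhs => rw [eq_sum_vecMulVec_mulVec hu A]
  simp [trace_sum, trace_vecMulVec, dotProduct_comm]

end OrthonormalBasis

section Spectral

variable {d N : ℕ} {X : Matrix (Fin d) (Fin N) ℝ} {u : Fin d → Fin d → ℝ} {μ : Fin d → ℝ}

theorem frobSq_mul_eq_sum (heig : ∀ i, (X * Xᵀ) *ᵥ u i = μ i • u i)
    (hu : ∀ i j, u i ⬝ᵥ u j = if i = j then 1 else 0) {m : ℕ} (Z : Matrix (Fin m) (Fin d) ℝ) :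
    frobSq (Z * X) = ∑ i, μ i * ((Z *ᵥ u i) ⬝ᵥ (Z *ᵥ u i)) := by
  rw [frobSq_eq_trace, transpose_mul, Matrix.mul_assoc, trace_mul_comm, ← Matrix.mul_assoc X,
    Matrix.mul_assoc, trace_mul_comm, ← sum_dotProduct_mulVec_eq_trace hu]
  refine Finset.sum_congr rfl fun i _ => ?_
  rw [← mulVec_mulVec, heig, mulVec_smul, dotProduct_smul, smul_eq_mul, ← mulVec_mulVec,
    dotProduct_mulVec, vecMul_transpose]

end Spectral

section Transport

variable {ι : Type*} [Fintype ι] {μ : ι → ℝ}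

theorem sum_eq_zero_of_sum_mul_le {a b : ι → ℝ} (ha : ∀ i, 0 ≤ a i) (hb : ∀ i, 0 ≤ b i)
    (hab : ∑ i, a i = ∑ i, b i) (hμ : ∑ i, μ i * a i ≤ ∑ i, μ i * b i)
    (hgap : ∀ i j, 0 < a i → 0 < b j → μ j < μ i) : ∑ i, a i = 0 := by
  have hterm : ∀ i j, 0 ≤ a i * b j * (μ i - μ j) := by
    intro i j
    rcases (ha i).eq_or_lt with hai | hai
    · simp [← hai]
    rcases (hb j).eq_or_lt with hbj | hbj
    · simp [← hbj]
    exact mul_nonneg (mul_nonneg hai.le hbj.le) (sub_nonneg.2 (hgap i j hai hbj).le)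
  -- the double sum is nonnegative termwise, but equals `(∑ a) * (∑ μ a - ∑ μ b) ≤ 0`
  have hdouble : ∑ i, ∑ j, a i * b j * (μ i - μ j) =
      (∑ i, μ i * a i) * (∑ j, b j) - (∑ i, a i) * (∑ j, μ j * b j) := by
    rw [Finset.sum_mul_sum, Finset.sum_mul_sum, ← Finset.sum_sub_distrib]
    refine Finset.sum_congr rfl fun i _ => ?_
    rw [← Finset.sum_sub_distrib]
    exact Finset.sum_congr rfl fun j _ => by ring
  have hzero : ∑ i, ∑ j, a i * b j * (μ i - μ j) = 0 := by
    refine le_antisymm ?_ (Finset.sum_nonneg fun i _ => Finset.sum_nonneg fun j _ => hterm i j)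
    rw [hdouble, ← hab]
    nlinarith [Finset.sum_nonneg fun i (_ : i ∈ Finset.univ) => ha i]
  have hprod : ∀ i j, a i * b j = 0 := by
    intro i j
    by_contra hne
    have hai : 0 < a i := (ha i).lt_of_ne (Ne.symm (left_ne_zero_of_mul hne))
    have hbj : 0 < b j := (hb j).lt_of_ne (Ne.symm (right_ne_zero_of_mul hne))
    have hi := (Finset.sum_eq_zero_iff_of_nonneg fun i _ =>
      Finset.sum_nonneg fun j _ => hterm i j).mp hzero i (Finset.mem_univ i)
    have hij := (Finset.sum_eq_zero_iff_of_nonneg fun j _ => hterm i j).mp hi j (Finset.mem_univ j)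
    exact (mul_pos (mul_pos hai hbj) (sub_pos.2 (hgap i j hai hbj))).ne' hij
  have hsq : (∑ i, a i) * (∑ i, a i) = 0 := by
    nth_rewrite 2 [hab]
    rw [Finset.sum_mul_sum]
    simp [hprod]
  exact mul_self_eq_zero.mp hsq

theorem eq_ite_of_sum_mul_le (p : ι → Prop) [DecidablePred p] {t : ι → ℝ}
    (hgap : ∀ i j, p i → ¬ p j → μ j < μ i) (ht0 : ∀ i, 0 ≤ t i) (ht1 : ∀ i, t i ≤ 1)
    (hsum : ∑ i, t i = ∑ i, if p i then 0 else 1)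
    (hle : ∑ i, μ i * t i ≤ ∑ i, if p i then 0 else μ i) (i : ι) :
    t i = if p i then 0 else 1 := by
  -- `a - b = t - 𝟙[¬ p]`, split into its parts on `p` and on `¬ p`
  set a : ι → ℝ := fun i => if p i then t i else 0
  set b : ι → ℝ := fun i => if p i then 0 else 1 - t i
  have ha : ∀ i, 0 ≤ a i := fun i => by by_cases h : p i <;> simp [a, h, ht0]
  have hb : ∀ i, 0 ≤ b i := fun i => by by_cases h : p i <;> simp [b, h, ht1]
  have hab : ∑ i, a i = ∑ i, b i := by
    have : ∑ i, (a i - b i) = ∑ i, (t i - if p i then 0 else 1) :=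
      Finset.sum_congr rfl fun i _ => by by_cases h : p i <;> simp [a, b, h]
    rw [Finset.sum_sub_distrib, Finset.sum_sub_distrib, hsum, sub_self] at this
    linarith
  have hμab : ∑ i, μ i * a i ≤ ∑ i, μ i * b i := by
    have : ∑ i, μ i * (a i - b i) = ∑ i, (μ i * t i - if p i then 0 else μ i) :=
      Finset.sum_congr rfl fun i _ => by by_cases h : p i <;> simp [a, b, h]; ring
    simp only [mul_sub, Finset.sum_sub_distrib] at this
    linarith
  have hsa := sum_eq_zero_of_sum_mul_le ha hb hab hμab fun i j hai hbj =>
    hgap i j (by by_contra h; simp [a, h] at hai) (by intro h; simp [b, h] at hbj)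
  have hai : a i = 0 :=
    (Finset.sum_eq_zero_iff_of_nonneg fun i _ => ha i).mp hsa i (Finset.mem_univ i)
  have hbi : b i = 0 :=
    (Finset.sum_eq_zero_iff_of_nonneg fun i _ => hb i).mp (hab ▸ hsa) i (Finset.mem_univ i)
  by_cases h : p i
  · simpa [a, h] using hai
  · simp only [b, h, if_false] at hbi ⊢
    linarith

end Transport

theorem sum_ite_val_lt_eq_sub (d k : ℕ) :
    ∑ i : Fin d, (if (i : ℕ) < k then (0 : ℝ) else 1) = ((d - k : ℕ) : ℝ) := by
  rw [Fin.sum_univ_eq_sum_range (fun i => if i < k then (0 : ℝ) else 1)]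
  simp only [Finset.sum_ite, Finset.sum_const_zero, Finset.sum_const, zero_add, nsmul_eq_mul,
    mul_one, not_lt]
  rw [Finset.range_eq_Ico, Finset.Ico_filter_le, Nat.card_Ico, max_eq_right (Nat.zero_le k)]

section TopEigenvectors

variable {d N k : ℕ} {X : Matrix (Fin d) (Fin N) ℝ} {u : Fin d → Fin d → ℝ} {μ : Fin d → ℝ}

def topProj (hk : k ≤ d) (u : Fin d → Fin d → ℝ) : Matrix (Fin d) (Fin d) ℝ :=
  orthoProj fun i : Fin k => u (Fin.castLE hk i)

theorem orthonormal_comp_castLE (hu : ∀ i j, u i ⬝ᵥ u j = if i = j then 1 else 0)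
    (hk : k ≤ d) (i j : Fin k) :
    u (Fin.castLE hk i) ⬝ᵥ u (Fin.castLE hk j) = if i = j then 1 else 0 := by
  simpa only [Fin.castLE_inj] using hu (Fin.castLE hk i) (Fin.castLE hk j)

theorem topProj_mulVec (hu : ∀ i j, u i ⬝ᵥ u j = if i = j then 1 else 0) (hk : k ≤ d)
    (j : Fin d) : topProj hk u *ᵥ u j = if (j : ℕ) < k then u j else 0 := by
  split_ifs with hj
  · exact orthoProj_mulVec_self (orthonormal_comp_castLE hu hk) ⟨j, hj⟩
  · refine orthoProj_mulVec_eq_zero fun i => ?_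
    rw [hu, if_neg]
    rintro rfl
    exact hj i.isLt

theorem one_sub_topProj_mulVec (hu : ∀ i j, u i ⬝ᵥ u j = if i = j then 1 else 0) (hk : k ≤ d)
    (j : Fin d) : (1 - topProj hk u) *ᵥ u j = if (j : ℕ) < k then 0 else u j := by
  rw [sub_mulVec, one_mulVec, topProj_mulVec hu hk]
  split_ifs <;> simp

theorem frobSq_one_sub_topProj_mul (heig : ∀ i, (X * Xᵀ) *ᵥ u i = μ i • u i)
    (hu : ∀ i j, u i ⬝ᵥ u j = if i = j then 1 else 0) (hk : k ≤ d) :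
    frobSq ((1 - topProj hk u) * X) = ∑ i : Fin d, if (i : ℕ) < k then 0 else μ i := by
  rw [frobSq_mul_eq_sum heig hu]
  refine Finset.sum_congr rfl fun i _ => ?_
  rw [one_sub_topProj_mulVec hu hk]
  split_ifs <;> simp [hu]

theorem one_sub_eq_topProj (heig : ∀ i, (X * Xᵀ) *ᵥ u i = μ i • u i)
    (hu : ∀ i j, u i ⬝ᵥ u j = if i = j then 1 else 0)
    (hgap : ∀ i j : Fin d, (i : ℕ) < k → k ≤ (j : ℕ) → μ j < μ i) (hk : k ≤ d)
    {P : Matrix (Fin d) (Fin d) ℝ} (hP : P.IsSymm) (hP' : IsIdempotentElem P)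
    (htr : trace P = (d - k : ℕ))
    (hle : frobSq (P * X) ≤ frobSq ((1 - topProj hk u) * X)) :
    1 - P = topProj hk u := by
  have hpyth (i : Fin d) :
      1 = (P *ᵥ u i) ⬝ᵥ (P *ᵥ u i) + ((1 - P) *ᵥ u i) ⬝ᵥ ((1 - P) *ᵥ u i) := by
    rw [← dotProduct_self_eq_add_of_isSymm_of_isIdempotentElem hP hP', hu, if_pos rfl]
  have hnonneg (x : Fin d → ℝ) : 0 ≤ x ⬝ᵥ x := Finset.sum_nonneg fun i _ => mul_self_nonneg (x i)
  have ht : ∀ i, (P *ᵥ u i) ⬝ᵥ (P *ᵥ u i) = if (i : ℕ) < k then 0 else 1 := by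
    refine eq_ite_of_sum_mul_le (fun i : Fin d => (i : ℕ) < k)
      (fun i j hi hj => hgap i j hi (not_lt.mp hj)) (fun i => hnonneg _)
      (fun i => by linarith [hpyth i, hnonneg ((1 - P) *ᵥ u i)]) ?_ ?_
    · simp only [dotProduct_mulVec_self_of_isSymm_of_isIdempotentElem hP hP',
        sum_dotProduct_mulVec_eq_trace hu, htr, sum_ite_val_lt_eq_sub]
    · rwa [frobSq_mul_eq_sum heig hu, frobSq_one_sub_topProj_mul heig hu hk] at hle
  refine ext_of_mulVec_orthonormal hu fun i => ?_
  rw [topProj_mulVec hu hk]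
  have hti := ht i
  split_ifs at hti ⊢
  · rw [sub_mulVec, one_mulVec, dotProduct_self_eq_zero.mp hti, sub_zero]
  · exact dotProduct_self_eq_zero.mp (by linarith [hpyth i])

end TopEigenvectors

theorem stmt2_general {d N k : ℕ} (hk : k < d)
    (X : Matrix (Fin d) (Fin N) ℝ) (hrank : X.rank = d)
    (u : Fin d → (Fin d → ℝ)) (μ : Fin d → ℝ)
    (heig : ∀ i, (X * Xᵀ) *ᵥ u i = μ i • u i)
    (horth : ∀ i j, u i ⬝ᵥ u j = if i = j then (1 : ℝ) else 0)
    (hgap : ∀ i j : Fin d, (i : ℕ) < k → k ≤ (j : ℕ) → μ j < μ i)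
    (W1 : Matrix (Fin k) (Fin d) ℝ) (W2 : Matrix (Fin d) (Fin k) ℝ)
    (hmin : ∀ (V1 : Matrix (Fin k) (Fin d) ℝ) (V2 : Matrix (Fin d) (Fin k) ℝ),
      frobSq (X - W2 * W1 * X) ≤ frobSq (X - V2 * V1 * X)) :
    W2 * W1 = ∑ i : Fin k,
      vecMulVec (u (Fin.castLE hk.le i)) (u (Fin.castLE hk.le i)) := by
  have hsub (B : Matrix (Fin d) (Fin d) ℝ) : X - B * X = (1 - B) * X := by
    rw [Matrix.sub_mul, Matrix.one_mul]
  obtain ⟨v, hv, hvW⟩ := exists_orthonormal_mulVec_eq_zero W2ᵀ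
  set P := orthoProj v
  have hPW : P * W2 = 0 := orthoProj_mul_eq_zero hvW
  have hopt : frobSq ((1 - W2 * W1) * X) ≤ frobSq ((1 - topProj hk.le u) * X) := by
    have h := hmin (of fun i => u (Fin.castLE hk.le i)) (of fun i => u (Fin.castLE hk.le i))ᵀ
    rwa [← orthoProj_eq_transpose_mul, hsub, hsub] at h
  have hsplit : frobSq ((1 - W2 * W1) * X) =
      frobSq (P * X) + frobSq ((1 - P) * ((1 - W2 * W1) * X)) := by
    rw [frobSq_eq_add_of_isSymm_of_isIdempotentElem (isSymm_orthoProj v)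
      (isIdempotentElem_orthoProj hv), ← Matrix.mul_assoc P, Matrix.mul_sub, Matrix.mul_one,
      ← Matrix.mul_assoc, hPW, Matrix.zero_mul, sub_zero]
  have hP : 1 - P = topProj hk.le u :=
    one_sub_eq_topProj heig horth hgap hk.le (isSymm_orthoProj v) (isIdempotentElem_orthoProj hv)
      (by rw [trace_orthoProj hv, Fintype.card_fin])
      (by linarith [frobSq_nonneg ((1 - P) * ((1 - W2 * W1) * X))])
  have hres : (1 - P) * (1 - W2 * W1) = 0 := by
    refine eq_zero_of_mul_eq_zero_of_rank_eq hrank (frobSq_eq_zero_iff.mp ?_)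
    rw [← hP, sub_sub_cancel] at hopt
    rw [Matrix.mul_assoc]
    linarith [frobSq_nonneg ((1 - P) * ((1 - W2 * W1) * X))]
  calc W2 * W1 = (1 - P) * (W2 * W1) := by
        rw [Matrix.sub_mul, Matrix.one_mul, ← Matrix.mul_assoc, hPW, Matrix.zero_mul, sub_zero]
    _ = 1 - P := by rwa [Matrix.mul_sub, Matrix.mul_one, sub_eq_zero, eq_comm] at hres
    _ = topProj hk.le u := hP

/-- Baldi–Hornik: every global minimizer of the unregularized two-layer linear
autoencoder objective has `W₂W₁` equal to the orthogonal projection onto the span of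
the top `k` eigenvectors of `X Xᵀ`. -/
theorem stmt2 {d N k : ℕ} (hk : k < d) (hdN : d ≤ N)
    (X : Matrix (Fin d) (Fin N) ℝ) (hrank : X.rank = d)
    (u : Fin d → (Fin d → ℝ)) (μ : Fin d → ℝ)
    (heig : ∀ i, (X * Xᵀ) *ᵥ u i = μ i • u i)
    (horth : ∀ i j, u i ⬝ᵥ u j = if i = j then (1 : ℝ) else 0)
    (hsort : Antitone μ)
    (hgap : ∀ i j : Fin d, (i : ℕ) < k → k ≤ (j : ℕ) → μ j < μ i)
    (W1 : Matrix (Fin k) (Fin d) ℝ) (W2 : Matrix (Fin d) (Fin k) ℝ)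
    (hmin : ∀ (V1 : Matrix (Fin k) (Fin d) ℝ) (V2 : Matrix (Fin d) (Fin k) ℝ),
      frobSq (X - W2 * W1 * X) ≤ frobSq (X - V2 * V1 * X)) :
    W2 * W1 = ∑ i : Fin k,
      vecMulVec (u (Fin.castLE hk.le i)) (u (Fin.castLE hk.le i)) :=
  stmt2_general hk X hrank u μ heig horth hgap W1 W2 hmin
end

section
/- If Γ is a symmetric matrix with fewer than k strictly positive eigenvalues, then for every W ∈ R^{k×p} the Barlow Twins loss ||W Γ W^T - I_k||_F^2 is strictly positive; i.e., zero loss is unachievable when λ_k(Γ) ≤ 0. -/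
open Matrix

/-- If the symmetric matrix `Γ` has fewer than `k` strictly positive eigenvalues, then
the Barlow Twins loss `‖W Γ Wᵀ - I_k‖_F²` is strictly positive for every `W`. -/
theorem stmt6 {p k : ℕ} (Γ : Matrix (Fin p) (Fin p) ℝ) (hΓ : Γ.IsHermitian)
    (hcount : (Finset.univ.filter (fun i => 0 < hΓ.eigenvalues i)).card < k) :
    ∀ W : Matrix (Fin k) (Fin p) ℝ, 0 < frobSq (W * Γ * Wᵀ - 1) := by
  intro W
  by_contra hle
  push_neg at hle
  have hnonneg : 0 ≤ frobSq (W * Γ * Wᵀ - 1) := by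
    apply Finset.sum_nonneg; intro i _
    apply Finset.sum_nonneg; intro j _
    positivity
  have hzero : frobSq (W * Γ * Wᵀ - 1) = 0 := le_antisymm hle hnonneg
  have hId : W * Γ * Wᵀ = 1 := by
    have hentry : ∀ i j, (W * Γ * Wᵀ - 1 : Matrix (Fin k) (Fin k) ℝ) i j = 0 := by
      intro i j
      have h1 : frobSq (W * Γ * Wᵀ - 1) = 0 := hzero
      unfold frobSq at h1
      have h2 := (Finset.sum_eq_zero_iff_of_nonneg (fun i _ => Finset.sum_nonneg
        (fun j _ => by positivity))).mp h1 i (Finset.mem_univ i)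
      have h3 := (Finset.sum_eq_zero_iff_of_nonneg (fun j _ => by positivity)).mp h2 j
        (Finset.mem_univ j)
      exact (pow_eq_zero_iff two_ne_zero).mp h3
    ext i j
    have := hentry i j
    simpa [sub_eq_zero] using this
  set S : Finset (Fin p) := Finset.univ.filter (fun i => 0 < hΓ.eigenvalues i) with hS
  set U : Matrix (Fin p) (Fin p) ℝ := (hΓ.eigenvectorUnitary : Matrix (Fin p) (Fin p) ℝ) with hU
  let f : (Fin k → ℝ) →ₗ[ℝ] ({i // i ∈ S} → ℝ) :=
    (LinearMap.funLeft ℝ ℝ Subtype.val) ∘ₗ (star U).mulVecLin ∘ₗ Wᵀ.mulVecLin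
  have hdim : Module.finrank ℝ ({i // i ∈ S} → ℝ) < Module.finrank ℝ (Fin k → ℝ) := by
    simpa using hcount
  have hninj : ¬ Function.Injective f := by
    intro hinj
    exact absurd (LinearMap.finrank_le_finrank_of_injective hinj) (not_le.mpr hdim)
  obtain ⟨x, hx0, hfx⟩ : ∃ x : Fin k → ℝ, x ≠ 0 ∧ f x = 0 := by
    rw [← LinearMap.ker_eq_bot] at hninj
    obtain ⟨x, hxmem, hx0⟩ := Submodule.exists_mem_ne_zero_of_ne_bot hninj
    exact ⟨x, hx0, hxmem⟩
  set v : Fin p → ℝ := Wᵀ *ᵥ x with hv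
  set c : Fin p → ℝ := star U *ᵥ v with hc
  have hcS : ∀ i ∈ S, c i = 0 := by
    intro i hi
    have := congrFun hfx ⟨i, hi⟩
    simpa only [f, LinearMap.comp_apply, Matrix.mulVecLin_apply, LinearMap.funLeft_apply,
      Pi.zero_apply] using this
  have hquad : x ⬝ᵥ x = ∑ i, hΓ.eigenvalues i * (c i) ^ 2 := by
    have h1 : x ⬝ᵥ x = x ⬝ᵥ ((W * Γ * Wᵀ) *ᵥ x) := by rw [hId, one_mulVec]
    have hΓeq : Γ = U * diagonal hΓ.eigenvalues * star U := by
      simpa [hU] using hΓ.spectral_theorem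
    have h2 : W * Γ * Wᵀ = W * (U * diagonal hΓ.eigenvalues * star U) * Wᵀ := by
      rw [← hΓeq]
    have hstarU : star U = Uᵀ := by
      ext i j; simp [star, conjTranspose]
    have key : x ⬝ᵥ ((W * Γ * Wᵀ) *ᵥ x) = c ⬝ᵥ (diagonal hΓ.eigenvalues *ᵥ c) := by
      rw [h2]
      rw [show (W * (U * diagonal hΓ.eigenvalues * star U) * Wᵀ) *ᵥ x
          = W *ᵥ (U *ᵥ (diagonal hΓ.eigenvalues *ᵥ (star U *ᵥ (Wᵀ *ᵥ x)))) by
        simp [← mulVec_mulVec, Matrix.mul_assoc]]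
      rw [dotProduct_mulVec, dotProduct_mulVec, ← mulVec_transpose W, ← hv,
        ← mulVec_transpose U, ← hstarU, ← hc]
    rw [h1, key]
    simp only [dotProduct, mulVec_diagonal]
    exact Finset.sum_congr rfl fun i _ => by ring
  have hpos : 0 < x ⬝ᵥ x := by
    have : x ⬝ᵥ x ≠ 0 := fun h => hx0 (by
      ext i
      have hnn : ∀ j ∈ Finset.univ, 0 ≤ x j * x j := fun j _ => mul_self_nonneg _
      have := (Finset.sum_eq_zero_iff_of_nonneg hnn).mp h i (Finset.mem_univ i)
      exact mul_self_eq_zero.mp this)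
    have hnn : 0 ≤ x ⬝ᵥ x := Finset.sum_nonneg fun j _ => mul_self_nonneg _
    exact lt_of_le_of_ne hnn (Ne.symm this)
  have hnonpos : ∑ i, hΓ.eigenvalues i * (c i) ^ 2 ≤ 0 := by
    apply Finset.sum_nonpos
    intro i _
    by_cases hi : 0 < hΓ.eigenvalues i
    · have : i ∈ S := by simp [hS, hi]
      rw [hcS i this]; simp
    · push_neg at hi
      exact mul_nonpos_of_nonpos_of_nonneg hi (sq_nonneg _)
  rw [hquad] at hpos
  exact absurd hnonpos (not_le.mpr hpos)
end

section
/- Among all W ∈ R^{k×p} satisfying W Γ W^T = I_k, the matrix W* whose rows are λ_i^{-1/2} u_i^T (top-k eigenpairs of Γ, assuming λ_k > 0 and λ_k > λ_{k+1}) has minimal Frobenius norm, and any minimal-norm solution equals Q W* for some orthogonal Q ∈ R^{k×k}. -/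
open Matrix

open Matrix

lemma reindex_sum {p k : ℕ} (hkp : k ≤ p) (f : Fin p → ℝ) :
    ∑ i : Fin k, f (Fin.castLE hkp i) = ∑ j : Fin p, if (j : ℕ) < k then f j else 0 := by
  have hF : ∀ n : ℕ, n < p → ℝ := fun n h => f ⟨n, h⟩
  set F : ℕ → ℝ := fun n => if h : n < p then f ⟨n, h⟩ else 0 with hFdef
  have h1 : ∑ i : Fin k, f (Fin.castLE hkp i) = ∑ n ∈ Finset.range k, F n := by
    rw [← Fin.sum_univ_eq_sum_range]
    apply Finset.sum_congr rfl
    intro i _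
    simp only [hFdef]
    rw [dif_pos (lt_of_lt_of_le i.isLt hkp)]
    rfl
  have h2 : ∑ j : Fin p, (if (j : ℕ) < k then f j else 0)
      = ∑ n ∈ Finset.range p, (if n < k then F n else 0) := by
    rw [← Fin.sum_univ_eq_sum_range]
    apply Finset.sum_congr rfl
    intro j _
    simp only [hFdef]
    rw [dif_pos j.isLt]
  rw [h1, h2]
  rw [← Finset.sum_subset (Finset.range_subset_range.2 hkp)
    (fun x _ hx => by simp [Finset.mem_range] at hx; rw [if_neg (by omega)])]
  apply Finset.sum_congr rfl
  intro n hn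
  rw [if_pos (Finset.mem_range.1 hn)]

open Matrix

lemma inv_quad_bound {k : ℕ} (H : Matrix (Fin k) (Fin k) ℝ)
    (hlow : ∀ y : Fin k → ℝ, y ⬝ᵥ y ≤ y ⬝ᵥ (H *ᵥ y)) :
    IsUnit H.det ∧ ∀ x : Fin k → ℝ, 0 ≤ x ⬝ᵥ (H⁻¹ *ᵥ x) ∧ x ⬝ᵥ (H⁻¹ *ᵥ x) ≤ x ⬝ᵥ x := by
  have hdet : IsUnit H.det := by
    rw [isUnit_iff_ne_zero]
    intro h0
    obtain ⟨v, hv, hHv⟩ := Matrix.exists_mulVec_eq_zero_iff.2 h0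
    have := hlow v
    rw [hHv, dotProduct_zero] at this
    have hvv : v ⬝ᵥ v = 0 := le_antisymm this (by
      apply Finset.sum_nonneg; intro i _; exact mul_self_nonneg _)
    exact hv (dotProduct_self_eq_zero.1 hvv)
  refine ⟨hdet, fun x => ?_⟩
  set y := H⁻¹ *ᵥ x with hy
  have hx : H *ᵥ y = x := by
    rw [hy, Matrix.mulVec_mulVec, Matrix.mul_nonsing_inv H hdet, Matrix.one_mulVec]
  have hs : x ⬝ᵥ y = y ⬝ᵥ (H *ᵥ y) := by rw [← hx, dotProduct_comm]
  have hyy0 : (0:ℝ) ≤ y ⬝ᵥ y := by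
    apply Finset.sum_nonneg; intro i _; exact mul_self_nonneg _
  have hxx0 : (0:ℝ) ≤ x ⬝ᵥ x := by
    apply Finset.sum_nonneg; intro i _; exact mul_self_nonneg _
  have hs1 : y ⬝ᵥ y ≤ x ⬝ᵥ y := by rw [hs]; exact hlow y
  have hs0 : (0:ℝ) ≤ x ⬝ᵥ y := le_trans hyy0 hs1
  refine ⟨hs0, ?_⟩
  rcases eq_or_lt_of_le hyy0 with hz | hz
  · have : y = 0 := dotProduct_self_eq_zero.1 hz.symm
    have hx0 : x = 0 := by rw [← hx, this, Matrix.mulVec_zero]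
    simp [hx0]
  · -- Cauchy-Schwarz
    have hcs : (x ⬝ᵥ y)^2 ≤ (x ⬝ᵥ x) * (y ⬝ᵥ y) := by
      have := Finset.sum_mul_sq_le_sq_mul_sq Finset.univ x y
      calc (x ⬝ᵥ y)^2 = (∑ i, x i * y i)^2 := rfl
        _ ≤ (∑ i, x i ^2) * (∑ i, y i ^2) := this
        _ = (x ⬝ᵥ x) * (y ⬝ᵥ y) := by simp [dotProduct, pow_two]
    have hlt : (0:ℝ) < x ⬝ᵥ y := lt_of_lt_of_le hz hs1
    have : (x ⬝ᵥ y) * (x ⬝ᵥ y) ≤ (x ⬝ᵥ x) * (x ⬝ᵥ y) := by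
      calc (x ⬝ᵥ y) * (x ⬝ᵥ y) = (x ⬝ᵥ y)^2 := (pow_two _).symm
        _ ≤ (x ⬝ᵥ x) * (y ⬝ᵥ y) := hcs
        _ ≤ (x ⬝ᵥ x) * (x ⬝ᵥ y) := mul_le_mul_of_nonneg_left hs1 hxx0
    exact le_of_mul_le_mul_right this hlt

open Matrix

lemma quad_expand {k p : ℕ} (R : Matrix (Fin k) (Fin p) ℝ) (y : Fin k → ℝ) :
    y ⬝ᵥ ((R * Rᵀ) *ᵥ y) = ∑ j, (∑ i, y i * R i j) ^ 2 := by
  calc y ⬝ᵥ ((R * Rᵀ) *ᵥ y)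
      = ∑ i, ∑ i', ∑ j, (y i * R i j) * (y i' * R i' j) := by
        simp only [dotProduct, Matrix.mulVec, Matrix.mul_apply, Matrix.transpose_apply,
          Finset.mul_sum, Finset.sum_mul]
        apply Finset.sum_congr rfl; intro i _
        apply Finset.sum_congr rfl; intro i' _
        apply Finset.sum_congr rfl; intro j _
        ring
    _ = ∑ i, ∑ j, ∑ i', (y i * R i j) * (y i' * R i' j) := by
        apply Finset.sum_congr rfl; intro i _
        exact Finset.sum_comm
    _ = ∑ j, ∑ i, ∑ i', (y i * R i j) * (y i' * R i' j) := Finset.sum_comm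
    _ = ∑ j, (∑ i, y i * R i j) ^ 2 := by
        apply Finset.sum_congr rfl; intro j _
        rw [pow_two, Finset.sum_mul_sum]

open Matrix

lemma gram_expand {k p : ℕ} (lam : Fin p → ℝ) (a : Matrix (Fin k) (Fin p) ℝ)
    (ha : ∀ i i' : Fin k, ∑ j, lam j * (a i j * a i' j) = if i = i' then (1:ℝ) else 0)
    (y : Fin k → ℝ) :
    ∑ j, lam j * (∑ i, y i * a i j) ^ 2 = y ⬝ᵥ y := by
  calc ∑ j, lam j * (∑ i, y i * a i j) ^ 2
      = ∑ j, ∑ i, ∑ i', (y i * y i') * (lam j * (a i j * a i' j)) := by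
        apply Finset.sum_congr rfl; intro j _
        rw [pow_two, Finset.sum_mul_sum, Finset.mul_sum]
        apply Finset.sum_congr rfl; intro i _
        rw [Finset.mul_sum]
        apply Finset.sum_congr rfl; intro i' _
        ring
    _ = ∑ i, ∑ j, ∑ i', (y i * y i') * (lam j * (a i j * a i' j)) := Finset.sum_comm
    _ = ∑ i, ∑ i', ∑ j, (y i * y i') * (lam j * (a i j * a i' j)) := by
        apply Finset.sum_congr rfl; intro i _
        exact Finset.sum_comm
    _ = ∑ i, ∑ i', (y i * y i') * (if i = i' then (1:ℝ) else 0) := by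
        apply Finset.sum_congr rfl; intro i _
        apply Finset.sum_congr rfl; intro i' _
        rw [← Finset.mul_sum, ha i i']
    _ = ∑ i, y i * y i := by
        apply Finset.sum_congr rfl; intro i _
        rw [Finset.sum_eq_single i (fun i' _ hne => by rw [if_neg (Ne.symm hne), mul_zero])
          (fun h => absurd (Finset.mem_univ i) h)]
        rw [if_pos rfl, mul_one]
    _ = y ⬝ᵥ y := rfl

lemma core {p k : ℕ} (hkp : k ≤ p) (hk : 0 < k) (lam : Fin p → ℝ)
    (hsort : Antitone lam) (hpos : ∀ i : Fin p, (i:ℕ) < k → 0 < lam i)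
    (hgap : ∀ i j : Fin p, (i:ℕ) < k → k ≤ (j:ℕ) → lam j < lam i)
    (a : Matrix (Fin k) (Fin p) ℝ)
    (ha : ∀ i i' : Fin k, ∑ j, lam j * (a i j * a i' j) = if i = i' then (1:ℝ) else 0) :
    ((∑ i : Fin k, (lam (Fin.castLE hkp i))⁻¹) ≤ ∑ i, ∑ j, (a i j)^2) ∧
    ((∑ i, ∑ j, (a i j)^2 = ∑ i : Fin k, (lam (Fin.castLE hkp i))⁻¹) →
      ∀ (i : Fin k) (j : Fin p), k ≤ (j:ℕ) → a i j = 0) := by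
  have hk1p : k - 1 < p := by omega
  set K : Fin p := ⟨k-1, hk1p⟩ with hKdef
  have hKk : (K:ℕ) < k := by simp [hKdef]; omega
  have hlamK : 0 < lam K := hpos K hKk
  set lt : Fin p → ℝ := fun j => max (lam j) (lam K / 2) with hltdef
  have hltpos : ∀ j, 0 < lt j := fun j => _root_.lt_of_lt_of_le (half_pos hlamK) (le_max_right _ _)
  have hlamle : ∀ j, lam j ≤ lt j := fun j => le_max_left _ _
  have hjleK : ∀ j : Fin p, (j:ℕ) < k → lam K ≤ lam j := by
    intro j hj
    exact hsort (by rw [Fin.le_def]; simp only [hKdef]; omega)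
  have hlteq : ∀ j : Fin p, (j:ℕ) < k → lt j = lam j := by
    intro j hj
    have := hjleK j hj
    simp only [hltdef]
    exact max_eq_left (by linarith)
  have hltlt : ∀ j : Fin p, k ≤ (j:ℕ) → lt j < lam K := by
    intro j hj
    exact max_lt (hgap K j hKk hj) (by linarith)
  set v : Fin p → ℝ := fun j => (lt j)⁻¹ with hvdef
  set t : ℝ := (lam K)⁻¹ with htdef
  have hvpos : ∀ j, 0 < v j := fun j => inv_pos.2 (hltpos j)
  have htpos : 0 < t := inv_pos.2 hlamK
  have hvle : ∀ j : Fin p, (j:ℕ) < k → v j ≤ t := by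
    intro j hj
    simp only [hvdef, htdef, hlteq j hj]
    exact inv_anti₀ hlamK (hjleK j hj)
  have hvgt : ∀ j : Fin p, k ≤ (j:ℕ) → t < v j := by
    intro j hj
    exact inv_strictAnti₀ (hltpos j) (hltlt j hj)
  -- matrices
  set R : Matrix (Fin k) (Fin p) ℝ := Matrix.of (fun i j => a i j * Real.sqrt (lt j)) with hRdef
  set H : Matrix (Fin k) (Fin k) ℝ := R * Rᵀ with hHdef
  have hz : ∀ (y : Fin k → ℝ) (j : Fin p),
      ∑ i, y i * R i j = (∑ i, y i * a i j) * Real.sqrt (lt j) := by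
    intro y j
    rw [Finset.sum_mul]
    apply Finset.sum_congr rfl; intro i _
    simp only [hRdef, Matrix.of_apply]
    ring
  have hquadH : ∀ y : Fin k → ℝ, y ⬝ᵥ (H *ᵥ y) = ∑ j, lt j * (∑ i, y i * a i j)^2 := by
    intro y
    rw [hHdef, quad_expand]
    apply Finset.sum_congr rfl; intro j _
    rw [hz y j, mul_pow, Real.sq_sqrt (le_of_lt (hltpos j))]
    ring
  have hlow : ∀ y : Fin k → ℝ, y ⬝ᵥ y ≤ y ⬝ᵥ (H *ᵥ y) := by
    intro y
    rw [hquadH, ← gram_expand lam a ha y]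
    apply Finset.sum_le_sum
    intro j _
    exact mul_le_mul_of_nonneg_right (hlamle j) (sq_nonneg _)
  obtain ⟨hdet, hGbound⟩ := inv_quad_bound H hlow
  set G := H⁻¹ with hGdef
  set P : Matrix (Fin p) (Fin p) ℝ := Rᵀ * G * R with hPdef
  have hPapp : ∀ j, P j j = (fun i => R i j) ⬝ᵥ (G *ᵥ (fun i => R i j)) := by
    intro j
    rw [hPdef, Matrix.mul_assoc]
    simp only [Matrix.mul_apply, Matrix.mulVec, dotProduct, Matrix.transpose_apply]
  have hw'0 : ∀ j, 0 ≤ P j j := by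
    intro j; rw [hPapp j]; exact (hGbound _).1
  have hw'w : ∀ j, P j j ≤ ∑ i, (R i j)^2 := by
    intro j
    rw [hPapp j]
    refine le_trans (hGbound _).2 ?_
    simp [dotProduct, pow_two]
  have hHsym : Hᵀ = H := by rw [hHdef, Matrix.transpose_mul, Matrix.transpose_transpose]
  have hGsym : Gᵀ = G := by rw [hGdef, Matrix.transpose_nonsing_inv, hHsym]
  have hGH : G * H = 1 := Matrix.nonsing_inv_mul H hdet
  have hHG : H * G = 1 := Matrix.mul_nonsing_inv H hdet
  have hPP : P * P = P := by
    have h1 : R * (Rᵀ * (G * R)) = R := by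
      rw [← Matrix.mul_assoc R Rᵀ (G * R), ← hHdef, ← Matrix.mul_assoc H G R, hHG,
        Matrix.one_mul]
    calc P * P = Rᵀ * (G * (R * (Rᵀ * (G * R)))) := by
          rw [hPdef]; simp only [Matrix.mul_assoc]
      _ = Rᵀ * (G * R) := by rw [h1]
      _ = P := by rw [hPdef, Matrix.mul_assoc]
  have hPsym : Pᵀ = P := by
    rw [hPdef, Matrix.transpose_mul, Matrix.transpose_mul, Matrix.transpose_transpose, hGsym,
      ← Matrix.mul_assoc]
  have hw'1 : ∀ j, P j j ≤ 1 := by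
    intro j
    have h1 : P j j = ∑ l, (P j l)^2 := by
      conv_lhs => rw [← hPP]
      rw [Matrix.mul_apply]
      apply Finset.sum_congr rfl; intro l _
      rw [pow_two]
      congr 1
      rw [← Matrix.transpose_apply P l j, hPsym]
    have h2 : (P j j)^2 ≤ ∑ l, (P j l)^2 :=
      Finset.single_le_sum (f := fun l => (P j l)^2) (fun l _ => sq_nonneg _) (Finset.mem_univ j)
    have h0 := hw'0 j
    nlinarith [h1, h2]
  have hsumw' : ∑ j, P j j = (k : ℝ) := by
    have h1 : ∑ j, P j j = (Rᵀ * (G * R)).trace := by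
      rw [← Matrix.mul_assoc, ← hPdef, Matrix.trace]
      rfl
    rw [h1, Matrix.trace_mul_comm, Matrix.mul_assoc, ← hHdef, hGH, Matrix.trace_one]
    simp
  have hcol : ∀ j, ∑ i, (a i j)^2 = (∑ i, (R i j)^2) * v j := by
    intro j
    have h1 : ∀ i : Fin k, (R i j)^2 = (a i j)^2 * lt j := by
      intro i
      simp only [hRdef, Matrix.of_apply, mul_pow, Real.sq_sqrt (le_of_lt (hltpos j))]
    rw [Finset.sum_congr rfl fun i _ => h1 i, ← Finset.sum_mul, hvdef]
    simp only
    rw [mul_assoc, mul_inv_cancel₀ (ne_of_gt (hltpos j)), mul_one]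
  have htotal : ∑ i, ∑ j, (a i j)^2 = ∑ j, (∑ i, (R i j)^2) * v j := by
    rw [Finset.sum_comm]
    exact Finset.sum_congr rfl fun j _ => hcol j
  have hstep1 : ∀ j, P j j * v j ≤ (∑ i, (R i j)^2) * v j :=
    fun j => mul_le_mul_of_nonneg_right (hw'w j) (le_of_lt (hvpos j))
  have hstep2 : ∀ j : Fin p, (if (j:ℕ) < k then v j else 0)
      + t * (P j j - (if (j:ℕ) < k then (1:ℝ) else 0)) ≤ P j j * v j := by
    intro j
    by_cases hj : (j:ℕ) < k
    · rw [if_pos hj, if_pos hj]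
      have h1 : v j ≤ t := hvle j hj
      have h2 : P j j ≤ 1 := hw'1 j
      nlinarith [mul_nonneg (sub_nonneg.2 h2) (sub_nonneg.2 h1)]
    · rw [if_neg hj, if_neg hj]
      have h1 : t ≤ v j := le_of_lt (hvgt j (le_of_not_gt hj))
      have h2 : 0 ≤ P j j := hw'0 j
      nlinarith [mul_nonneg h2 (sub_nonneg.2 h1)]
  have hsumind : ∑ j : Fin p, (if (j:ℕ) < k then (1:ℝ) else 0) = (k:ℝ) := by
    rw [← reindex_sum hkp (fun _ => (1:ℝ))]
    simp
  have hsumg : ∑ j : Fin p, (if (j:ℕ) < k then v j else 0)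
      = ∑ i : Fin k, (lam (Fin.castLE hkp i))⁻¹ := by
    rw [← reindex_sum hkp v]
    apply Finset.sum_congr rfl; intro i _
    simp only [hvdef]
    rw [hlteq _ (by simpa using i.isLt)]
  have hkey : ∑ j : Fin p, ((if (j:ℕ) < k then v j else 0)
      + t * (P j j - (if (j:ℕ) < k then (1:ℝ) else 0)))
      = ∑ i : Fin k, (lam (Fin.castLE hkp i))⁻¹ := by
    rw [Finset.sum_add_distrib, hsumg]
    have h1 : ∑ j : Fin p, t * (P j j - (if (j:ℕ) < k then (1:ℝ) else 0))
        = t * (∑ j, P j j - ∑ j : Fin p, (if (j:ℕ) < k then (1:ℝ) else 0)) := by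
      rw [← Finset.mul_sum, Finset.sum_sub_distrib]
    rw [h1, hsumw', hsumind, sub_self, mul_zero, add_zero]
  have hAle : ∑ j : Fin p, ((if (j:ℕ) < k then v j else 0)
      + t * (P j j - (if (j:ℕ) < k then (1:ℝ) else 0))) ≤ ∑ j, P j j * v j :=
    Finset.sum_le_sum fun j _ => hstep2 j
  have hBle : ∑ j, P j j * v j ≤ ∑ j, (∑ i, (R i j)^2) * v j :=
    Finset.sum_le_sum fun j _ => hstep1 j
  constructor
  · rw [htotal, ← hkey]
    exact le_trans hAle hBle
  · intro heq i j hj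
    have hC : ∑ j, (∑ i, (R i j)^2) * v j
        = ∑ j : Fin p, ((if (j:ℕ) < k then v j else 0)
          + t * (P j j - (if (j:ℕ) < k then (1:ℝ) else 0))) := by
      rw [← htotal, heq, ← hkey]
    have hw'veq : ∑ j, P j j * v j = ∑ j, (∑ i, (R i j)^2) * v j :=
      le_antisymm hBle (by rw [hC]; exact hAle)
    have heq2 : ∑ j : Fin p, ((if (j:ℕ) < k then v j else 0)
        + t * (P j j - (if (j:ℕ) < k then (1:ℝ) else 0))) = ∑ j, P j j * v j :=
      le_antisymm hAle (by rw [hw'veq, hC])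
    have hterm2 := (Finset.sum_eq_sum_iff_of_le (fun j _ => hstep2 j)).1 heq2 j (Finset.mem_univ j)
    have hterm1 := (Finset.sum_eq_sum_iff_of_le (fun j _ => hstep1 j)).1 hw'veq j (Finset.mem_univ j)
    rw [if_neg (not_lt.2 hj), if_neg (not_lt.2 hj)] at hterm2
    have hw'j : P j j = 0 := by
      rcases (hw'0 j).eq_or_lt with h | h
      · exact h.symm
      · exfalso
        have : t * P j j < v j * P j j := mul_lt_mul_of_pos_right (hvgt j hj) h
        nlinarith [hterm2]
    have hwj : (∑ i, (R i j)^2) = 0 := by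
      rw [hw'j, zero_mul] at hterm1
      rcases mul_eq_zero.1 hterm1.symm with h | h
      · exact h
      · exact absurd h (ne_of_gt (hvpos j))
    have hRij : R i j = 0 := by
      have := (Finset.sum_eq_zero_iff_of_nonneg (fun l (_ : l ∈ Finset.univ) => sq_nonneg (R l j))).1 hwj i (Finset.mem_univ i)
      exact pow_eq_zero_iff (n := 2) (by norm_num) |>.1 this
    have hsq : Real.sqrt (lt j) ≠ 0 := ne_of_gt (Real.sqrt_pos.2 (hltpos j))
    simp only [hRdef, Matrix.of_apply] at hRij
    rcases mul_eq_zero.1 hRij with h | h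
    · exact h
    · exact absurd h hsq
lemma expand_pair {p : ℕ} (c : Fin p → ℝ) (u : Fin p → Fin p → ℝ) (x y : Fin p → ℝ) :
    ∑ j, c j * ((∑ l, x l * u j l) * (∑ l', y l' * u j l'))
    = ∑ l, ∑ l', (x l * y l') * (∑ j, c j * (u j l * u j l')) := by
  calc ∑ j, c j * ((∑ l, x l * u j l) * (∑ l', y l' * u j l'))
      = ∑ j, ∑ l, ∑ l', (x l * y l') * (c j * (u j l * u j l')) := by
        apply Finset.sum_congr rfl; intro j _
        rw [Finset.sum_mul_sum, Finset.mul_sum]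
        apply Finset.sum_congr rfl; intro l _
        rw [Finset.mul_sum]
        apply Finset.sum_congr rfl; intro l' _
        ring
    _ = ∑ l, ∑ j, ∑ l', (x l * y l') * (c j * (u j l * u j l')) := Finset.sum_comm
    _ = ∑ l, ∑ l', ∑ j, (x l * y l') * (c j * (u j l * u j l')) := by
        apply Finset.sum_congr rfl; intro l _
        exact Finset.sum_comm
    _ = ∑ l, ∑ l', (x l * y l') * (∑ j, c j * (u j l * u j l')) := by
        apply Finset.sum_congr rfl; intro l _
        apply Finset.sum_congr rfl; intro l' _
        rw [Finset.mul_sum]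

lemma sum_ite_collapse {n : ℕ} (g : Fin n → ℝ) (l : Fin n) :
    ∑ l', g l' * (if l = l' then (1:ℝ) else 0) = g l := by
  rw [Finset.sum_eq_single l (fun l' _ hne => by rw [if_neg (fun h => hne h.symm), mul_zero])
    (fun h => absurd (Finset.mem_univ l) h)]
  rw [if_pos rfl, mul_one]

/-- Among all `W` with `W Γ Wᵀ = I_k`, the matrix `W*` with rows `λᵢ^{-1/2} uᵢᵀ`
(top-`k` eigenpairs of `Γ`, with `λ_k > 0 ` and an eigengap at `k`) has minimal
Frobenius norm, and any minimal-norm solution equals `Q W*` for an orthogonal `Q`. -/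
theorem stmt7 {p k : ℕ} (hkp : k ≤ p)
    (Γ : Matrix (Fin p) (Fin p) ℝ) (hΓ : Γᵀ = Γ)
    (u : Fin p → (Fin p → ℝ)) (lam : Fin p → ℝ)
    (heig : ∀ i, Γ *ᵥ u i = lam i • u i)
    (horth : ∀ i j, u i ⬝ᵥ u j = if i = j then (1 : ℝ) else 0)
    (hsort : Antitone lam)
    (hpos : ∀ i : Fin p, (i : ℕ) < k → 0 < lam i)
    (hgap : ∀ i j : Fin p, (i : ℕ) < k → k ≤ (j : ℕ) → lam j < lam i) :
    (Matrix.of (fun i j => (Real.sqrt (lam (Fin.castLE hkp i)))⁻¹ * u (Fin.castLE hkp i) j) * Γ *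
      (Matrix.of (fun i j => (Real.sqrt (lam (Fin.castLE hkp i)))⁻¹ * u (Fin.castLE hkp i) j))ᵀ
      = (1 : Matrix (Fin k) (Fin k) ℝ)) ∧
    (∀ W : Matrix (Fin k) (Fin p) ℝ, W * Γ * Wᵀ = 1 →
      frobSq (Matrix.of (fun i j =>
        (Real.sqrt (lam (Fin.castLE hkp i)))⁻¹ * u (Fin.castLE hkp i) j)) ≤ frobSq W) ∧
    (∀ W : Matrix (Fin k) (Fin p) ℝ, W * Γ * Wᵀ = 1 →
      frobSq W = frobSq (Matrix.of (fun i j =>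
        (Real.sqrt (lam (Fin.castLE hkp i)))⁻¹ * u (Fin.castLE hkp i) j)) →
      ∃ Q : Matrix (Fin k) (Fin k) ℝ, Q * Qᵀ = 1 ∧
        W = Q * Matrix.of (fun i j =>
          (Real.sqrt (lam (Fin.castLE hkp i)))⁻¹ * u (Fin.castLE hkp i) j)) := by
  -- basic orthonormal-basis facts
  have hUUt : (Matrix.of u) * (Matrix.of u)ᵀ = 1 := by
    ext j j'
    rw [Matrix.mul_apply, Matrix.one_apply]
    have h := horth j j'
    simpa [dotProduct, Matrix.transpose_apply, Matrix.of_apply] using h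
  have hUtU := mul_eq_one_comm.mp hUUt
  have hUU : ∀ l l' : Fin p, ∑ j, u j l * u j l' = if l = l' then (1:ℝ) else 0 := by
    intro l l'
    have h : ((Matrix.of u)ᵀ * (Matrix.of u)) l l' = (1 : Matrix (Fin p) (Fin p) ℝ) l l' := by
      rw [hUtU]
    rw [Matrix.mul_apply, Matrix.one_apply] at h
    simpa [Matrix.transpose_apply, Matrix.of_apply] using h
  have hGu : ∀ (j : Fin p) (l : Fin p), ∑ l'', Γ l l'' * u j l'' = lam j * u j l := by
    intro j l
    have h := congrFun (heig j) l
    simpa [Matrix.mulVec, dotProduct] using h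
  have hspec : ∀ l l' : Fin p, Γ l l' = ∑ j, lam j * (u j l * u j l') := by
    intro l l'
    calc Γ l l' = ∑ l'', Γ l l'' * (if l'' = l' then (1:ℝ) else 0) := by
          rw [Finset.sum_eq_single l'
            (fun l'' _ hne => by rw [if_neg hne, mul_zero])
            (fun h => absurd (Finset.mem_univ l') h), if_pos rfl, mul_one]
      _ = ∑ l'', Γ l l'' * (∑ j, u j l'' * u j l') := by
          apply Finset.sum_congr rfl; intro l'' _
          rw [hUU]
      _ = ∑ l'', ∑ j, Γ l l'' * (u j l'' * u j l') := by
          apply Finset.sum_congr rfl; intro l'' _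
          rw [Finset.mul_sum]
      _ = ∑ j, ∑ l'', Γ l l'' * (u j l'' * u j l') := Finset.sum_comm
      _ = ∑ j, (∑ l'', Γ l l'' * u j l'') * u j l' := by
          apply Finset.sum_congr rfl; intro j _
          rw [Finset.sum_mul]
          apply Finset.sum_congr rfl; intro l'' _
          ring
      _ = ∑ j, lam j * (u j l * u j l') := by
          apply Finset.sum_congr rfl; intro j _
          rw [hGu j l]
          ring
  have hGu2 : ∀ (jj l' : Fin p), ∑ l, u jj l * Γ l l' = lam jj * u jj l' := by
    intro jj l'
    calc ∑ l, u jj l * Γ l l' = ∑ l, Γ l' l * u jj l := by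
          apply Finset.sum_congr rfl; intro l _
          have h : Γᵀ l l' = Γ l l' := by rw [hΓ]
          rw [Matrix.transpose_apply] at h
          rw [← h]; ring
      _ = (Γ *ᵥ u jj) l' := rfl
      _ = lam jj * u jj l' := by rw [heig jj]; simp
  have husq : ∀ m : Fin p, ∑ j, (u m j)^2 = 1 := by
    intro m
    have h := horth m m
    rw [if_pos rfl] at h
    simpa [dotProduct, pow_two] using h
  -- part 1
  have part1 : (Matrix.of (fun i j => (Real.sqrt (lam (Fin.castLE hkp i)))⁻¹ * u (Fin.castLE hkp i) j) * Γ *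
      (Matrix.of (fun i j => (Real.sqrt (lam (Fin.castLE hkp i)))⁻¹ * u (Fin.castLE hkp i) j))ᵀ
      = (1 : Matrix (Fin k) (Fin k) ℝ)) := by
    ext i i'
    have hli : 0 < lam (Fin.castLE hkp i) := hpos _ (by simpa using i.isLt)
    have hli' : 0 < lam (Fin.castLE hkp i') := hpos _ (by simpa using i'.isLt)
    calc (Matrix.of (fun i j => (Real.sqrt (lam (Fin.castLE hkp i)))⁻¹ * u (Fin.castLE hkp i) j) * Γ *
        (Matrix.of (fun i j => (Real.sqrt (lam (Fin.castLE hkp i)))⁻¹ * u (Fin.castLE hkp i) j))ᵀ) i i'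
        = ∑ l', (∑ l, ((Real.sqrt (lam (Fin.castLE hkp i)))⁻¹ * u (Fin.castLE hkp i) l) * Γ l l')
            * ((Real.sqrt (lam (Fin.castLE hkp i')))⁻¹ * u (Fin.castLE hkp i') l') := by
          rw [Matrix.mul_apply]
          apply Finset.sum_congr rfl; intro l' _
          rw [Matrix.transpose_apply, Matrix.mul_apply]
          rfl
      _ = ∑ l', ((Real.sqrt (lam (Fin.castLE hkp i)))⁻¹ * (lam (Fin.castLE hkp i) * u (Fin.castLE hkp i) l'))
            * ((Real.sqrt (lam (Fin.castLE hkp i')))⁻¹ * u (Fin.castLE hkp i') l') := by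
          apply Finset.sum_congr rfl; intro l' _
          congr 1
          rw [← hGu2 (Fin.castLE hkp i) l', Finset.mul_sum]
          apply Finset.sum_congr rfl; intro l _
          ring
      _ = ((Real.sqrt (lam (Fin.castLE hkp i)))⁻¹ * lam (Fin.castLE hkp i)
            * (Real.sqrt (lam (Fin.castLE hkp i')))⁻¹)
            * ∑ l', u (Fin.castLE hkp i) l' * u (Fin.castLE hkp i') l' := by
          rw [Finset.mul_sum]
          apply Finset.sum_congr rfl; intro l' _
          ring
      _ = ((Real.sqrt (lam (Fin.castLE hkp i)))⁻¹ * lam (Fin.castLE hkp i)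
            * (Real.sqrt (lam (Fin.castLE hkp i')))⁻¹)
            * (if Fin.castLE hkp i = Fin.castLE hkp i' then (1:ℝ) else 0) := by
          congr 1
          have h := horth (Fin.castLE hkp i) (Fin.castLE hkp i')
          simpa [dotProduct] using h
      _ = (1 : Matrix (Fin k) (Fin k) ℝ) i i' := by
          rw [Matrix.one_apply]
          by_cases h : i = i'
          · subst h
            rw [if_pos rfl, if_pos rfl, mul_one]
            have hs : Real.sqrt (lam (Fin.castLE hkp i)) ≠ 0 :=
              ne_of_gt (Real.sqrt_pos.2 hli)
            rw [mul_comm ((Real.sqrt (lam (Fin.castLE hkp i)))⁻¹) (lam (Fin.castLE hkp i)),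
              mul_assoc, ← mul_inv, Real.mul_self_sqrt hli.le,
              mul_inv_cancel₀ (ne_of_gt hli)]
          · rw [if_neg h, if_neg (fun hc => h (Fin.castLE_inj.1 hc)), mul_zero]
  have hfrobstar : frobSq (Matrix.of (fun i j =>
      (Real.sqrt (lam (Fin.castLE hkp i)))⁻¹ * u (Fin.castLE hkp i) j))
      = ∑ i : Fin k, (lam (Fin.castLE hkp i))⁻¹ := by
    simp only [frobSq, Matrix.of_apply]
    apply Finset.sum_congr rfl; intro i _
    have hli : 0 < lam (Fin.castLE hkp i) := hpos _ (by simpa using i.isLt)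
    calc ∑ j, ((Real.sqrt (lam (Fin.castLE hkp i)))⁻¹ * u (Fin.castLE hkp i) j)^2
        = ∑ j, ((Real.sqrt (lam (Fin.castLE hkp i)))⁻¹)^2 * (u (Fin.castLE hkp i) j)^2 := by
          apply Finset.sum_congr rfl; intro j _
          ring
      _ = ((Real.sqrt (lam (Fin.castLE hkp i)))⁻¹)^2 * ∑ j, (u (Fin.castLE hkp i) j)^2 := by
          rw [Finset.mul_sum]
      _ = (lam (Fin.castLE hkp i))⁻¹ := by
          rw [husq, mul_one, inv_pow, Real.sq_sqrt hli.le]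
  rcases Nat.eq_zero_or_pos k with hk0 | hk
  · subst hk0
    refine ⟨part1, fun W hW => ?_, fun W hW heq => ?_⟩
    · simp [frobSq]
    · refine ⟨1, by simp, ?_⟩
      ext i j
      exact i.elim0
  · -- main case
    refine ⟨part1, ?_, ?_⟩
    · intro W hW
      set a : Matrix (Fin k) (Fin p) ℝ := Matrix.of (fun i j => ∑ l, W i l * u j l) with hadef
      have hca : ∀ i i' : Fin k, ∑ j, lam j * (a i j * a i' j) = if i = i' then (1:ℝ) else 0 := by
        intro i i'
        calc ∑ j, lam j * (a i j * a i' j)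
            = ∑ l, ∑ l', (W i l * W i' l') * (∑ j, lam j * (u j l * u j l')) := by
              simp only [hadef, Matrix.of_apply]
              exact expand_pair lam u (W i) (W i')
          _ = ∑ l, ∑ l', (W i l * W i' l') * Γ l l' := by
              apply Finset.sum_congr rfl; intro l _
              apply Finset.sum_congr rfl; intro l' _
              rw [← hspec]
          _ = (W * Γ * Wᵀ) i i' := by
              have h : (W * Γ * Wᵀ) i i' = ∑ l', ∑ l, (W i l * W i' l') * Γ l l' := by
                rw [Matrix.mul_apply]
                apply Finset.sum_congr rfl; intro l' _
                rw [Matrix.transpose_apply, Matrix.mul_apply, Finset.sum_mul]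
                apply Finset.sum_congr rfl; intro l _
                ring
              rw [h]
              exact Finset.sum_comm
          _ = if i = i' then (1:ℝ) else 0 := by rw [hW, Matrix.one_apply]
      have pars : ∀ i : Fin k, ∑ j, (a i j)^2 = ∑ l, (W i l)^2 := by
        intro i
        have h := expand_pair (fun _ => (1:ℝ)) u (W i) (W i)
        simp only [one_mul] at h
        calc ∑ j, (a i j)^2 = ∑ j, a i j * a i j := by
              apply Finset.sum_congr rfl; intro j _; rw [pow_two]
          _ = ∑ l, ∑ l', (W i l * W i l') * (∑ j, u j l * u j l') := by
              simp only [hadef, Matrix.of_apply]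
              exact h
          _ = ∑ l, ∑ l', (W i l * W i l') * (if l = l' then (1:ℝ) else 0) := by
              apply Finset.sum_congr rfl; intro l _
              apply Finset.sum_congr rfl; intro l' _
              rw [hUU]
          _ = ∑ l, (W i l)^2 := by
              apply Finset.sum_congr rfl; intro l _
              rw [sum_ite_collapse (fun l' => W i l * W i l') l, pow_two]
      have hfa : frobSq W = ∑ i, ∑ j, (a i j)^2 := by
        simp only [frobSq]
        exact (Finset.sum_congr rfl fun i _ => pars i).symm
      obtain ⟨hineq, _⟩ := core hkp hk lam hsort hpos hgap a hca
      rw [hfrobstar, hfa]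
      exact hineq
    · intro W hW heq
      set a : Matrix (Fin k) (Fin p) ℝ := Matrix.of (fun i j => ∑ l, W i l * u j l) with hadef
      have hca : ∀ i i' : Fin k, ∑ j, lam j * (a i j * a i' j) = if i = i' then (1:ℝ) else 0 := by
        intro i i'
        calc ∑ j, lam j * (a i j * a i' j)
            = ∑ l, ∑ l', (W i l * W i' l') * (∑ j, lam j * (u j l * u j l')) := by
              simp only [hadef, Matrix.of_apply]
              exact expand_pair lam u (W i) (W i')
          _ = ∑ l, ∑ l', (W i l * W i' l') * Γ l l' := by
              apply Finset.sum_congr rfl; intro l _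
              apply Finset.sum_congr rfl; intro l' _
              rw [← hspec]
          _ = (W * Γ * Wᵀ) i i' := by
              have h : (W * Γ * Wᵀ) i i' = ∑ l', ∑ l, (W i l * W i' l') * Γ l l' := by
                rw [Matrix.mul_apply]
                apply Finset.sum_congr rfl; intro l' _
                rw [Matrix.transpose_apply, Matrix.mul_apply, Finset.sum_mul]
                apply Finset.sum_congr rfl; intro l _
                ring
              rw [h]
              exact Finset.sum_comm
          _ = if i = i' then (1:ℝ) else 0 := by rw [hW, Matrix.one_apply]
      have pars : ∀ i : Fin k, ∑ j, (a i j)^2 = ∑ l, (W i l)^2 := by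
        intro i
        have h := expand_pair (fun _ => (1:ℝ)) u (W i) (W i)
        simp only [one_mul] at h
        calc ∑ j, (a i j)^2 = ∑ j, a i j * a i j := by
              apply Finset.sum_congr rfl; intro j _; rw [pow_two]
          _ = ∑ l, ∑ l', (W i l * W i l') * (∑ j, u j l * u j l') := by
              simp only [hadef, Matrix.of_apply]
              exact h
          _ = ∑ l, ∑ l', (W i l * W i l') * (if l = l' then (1:ℝ) else 0) := by
              apply Finset.sum_congr rfl; intro l _
              apply Finset.sum_congr rfl; intro l' _
              rw [hUU]
          _ = ∑ l, (W i l)^2 := by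
              apply Finset.sum_congr rfl; intro l _
              rw [sum_ite_collapse (fun l' => W i l * W i l') l, pow_two]
      have hfa : frobSq W = ∑ i, ∑ j, (a i j)^2 := by
        simp only [frobSq]
        exact (Finset.sum_congr rfl fun i _ => pars i).symm
      obtain ⟨_, heqcase⟩ := core hkp hk lam hsort hpos hgap a hca
      have ha0 : ∀ (i : Fin k) (j : Fin p), k ≤ (j:ℕ) → a i j = 0 := by
        apply heqcase
        rw [← hfa, heq, hfrobstar]
      have hcomp : ∀ (i : Fin k) (l : Fin p), W i l = ∑ j, a i j * u j l := by
        intro i l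
        calc W i l = ∑ l', W i l' * (if l' = l then (1:ℝ) else 0) := by
              rw [Finset.sum_eq_single l
                (fun l' _ hne => by rw [if_neg hne, mul_zero])
                (fun h => absurd (Finset.mem_univ l) h), if_pos rfl, mul_one]
          _ = ∑ l', W i l' * (∑ j, u j l' * u j l) := by
              apply Finset.sum_congr rfl; intro l' _
              rw [hUU]
          _ = ∑ l', ∑ j, W i l' * (u j l' * u j l) := by
              apply Finset.sum_congr rfl; intro l' _
              rw [Finset.mul_sum]
          _ = ∑ j, ∑ l', W i l' * (u j l' * u j l) := Finset.sum_comm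
          _ = ∑ j, a i j * u j l := by
              apply Finset.sum_congr rfl; intro j _
              simp only [hadef, Matrix.of_apply]
              rw [Finset.sum_mul]
              apply Finset.sum_congr rfl; intro l' _
              ring
      refine ⟨Matrix.of (fun i m => Real.sqrt (lam (Fin.castLE hkp m)) * a i (Fin.castLE hkp m)),
        ?_, ?_⟩
      · ext i i'
        have hQ : ∀ m : Fin k, (Real.sqrt (lam (Fin.castLE hkp m)) * a i (Fin.castLE hkp m))
            * (Real.sqrt (lam (Fin.castLE hkp m)) * a i' (Fin.castLE hkp m))
            = lam (Fin.castLE hkp m) * (a i (Fin.castLE hkp m) * a i' (Fin.castLE hkp m)) := by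
          intro m
          have hl : 0 ≤ lam (Fin.castLE hkp m) := (hpos _ (by simpa using m.isLt)).le
          rw [mul_mul_mul_comm, Real.mul_self_sqrt hl]
        calc (Matrix.of (fun i m => Real.sqrt (lam (Fin.castLE hkp m)) * a i (Fin.castLE hkp m)) *
            (Matrix.of (fun i m => Real.sqrt (lam (Fin.castLE hkp m)) * a i (Fin.castLE hkp m)))ᵀ) i i'
            = ∑ m : Fin k, lam (Fin.castLE hkp m) * (a i (Fin.castLE hkp m) * a i' (Fin.castLE hkp m)) := by
              rw [Matrix.mul_apply]
              apply Finset.sum_congr rfl; intro m _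
              rw [Matrix.transpose_apply, Matrix.of_apply, Matrix.of_apply]
              exact hQ m
          _ = ∑ j : Fin p, if (j:ℕ) < k then lam j * (a i j * a i' j) else 0 :=
              reindex_sum hkp (fun j => lam j * (a i j * a i' j))
          _ = ∑ j, lam j * (a i j * a i' j) := by
              apply Finset.sum_congr rfl; intro j _
              by_cases hj : (j:ℕ) < k
              · rw [if_pos hj]
              · rw [if_neg hj, ha0 i j (le_of_not_gt hj)]
                ring
          _ = (1 : Matrix (Fin k) (Fin k) ℝ) i i' := by rw [hca, Matrix.one_apply]
      · ext i l
        calc W i l = ∑ j, a i j * u j l := hcomp i l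
          _ = ∑ j : Fin p, if (j:ℕ) < k then a i j * u j l else 0 := by
              apply Finset.sum_congr rfl; intro j _
              by_cases hj : (j:ℕ) < k
              · rw [if_pos hj]
              · rw [if_neg hj, ha0 i j (le_of_not_gt hj), zero_mul]
          _ = ∑ m : Fin k, a i (Fin.castLE hkp m) * u (Fin.castLE hkp m) l :=
              (reindex_sum hkp (fun j => a i j * u j l)).symm
          _ = ∑ m : Fin k, (Real.sqrt (lam (Fin.castLE hkp m)) * a i (Fin.castLE hkp m))
              * ((Real.sqrt (lam (Fin.castLE hkp m)))⁻¹ * u (Fin.castLE hkp m) l) := by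
              apply Finset.sum_congr rfl; intro m _
              have hl : 0 < lam (Fin.castLE hkp m) := hpos _ (by simpa using m.isLt)
              have hs : Real.sqrt (lam (Fin.castLE hkp m)) ≠ 0 := ne_of_gt (Real.sqrt_pos.2 hl)
              field_simp
          _ = (Matrix.of (fun i m => Real.sqrt (lam (Fin.castLE hkp m)) * a i (Fin.castLE hkp m)) *
              Matrix.of (fun i j => (Real.sqrt (lam (Fin.castLE hkp i)))⁻¹ * u (Fin.castLE hkp i) j)) i l := by
              rw [Matrix.mul_apply]
              simp only [Matrix.of_apply]
end

section
/- For a two-layer neural network f(x) = M^{-1/2} Σ_m w_m ψ(v_m^T x) with smooth bounded activation ψ having bounded derivative, the operator norm of the Hessian of each output coordinate f_i with respect to the parameter vector θ is O(R/√M) uniformly over all θ with ||θ - θ_0|| ≤ R. -/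
/-!
For one neuron `τ ↦ w(τ) ψ(a(τ))` with `w`, `a` linear in the parameters, the Hessian at `θ` is
`(u, v) ↦ w(θ) ψ''(a θ) a(u) a(v) + ψ'(a θ) (w(u) a(v) + w(v) a(u))`. Different neurons use
disjoint blocks of coordinates, so `∑ₘ wₘ(u)² ≤ ‖u‖²` and `∑ₘ aₘ(u)² ≤ d Bx² ‖u‖²`, and
Cauchy–Schwarz over `m` bounds the summed Hessian by `B (2R d Bx² + 2 √(d Bx²)) ‖u‖ ‖v‖`
independently of `M`, using `|wₘ(θ)| ≤ ‖θ‖ ≤ 2R`. The prefactor `M^{-1/2}` gives the rate.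
-/

open Finset

theorem abs_sum_mul_mul_le_sqrt_mul_sqrt {ι : Type*} (s : Finset ι) {c : ι → ℝ} {C : ℝ}
    (hC : 0 ≤ C) (hc : ∀ j ∈ s, |c j| ≤ C) (a b : ι → ℝ) :
    |∑ j ∈ s, c j * a j * b j| ≤ C * (√(∑ j ∈ s, a j ^ 2) * √(∑ j ∈ s, b j ^ 2)) :=
  calc |∑ j ∈ s, c j * a j * b j|
      ≤ ∑ j ∈ s, C * (|a j| * |b j|) := by
        refine (abs_sum_le_sum_abs _ _).trans (sum_le_sum fun j hj => ?_)
        rw [abs_mul, abs_mul, mul_assoc]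
        exact mul_le_mul_of_nonneg_right (hc j hj) (by positivity)
    _ ≤ C * (√(∑ j ∈ s, a j ^ 2) * √(∑ j ∈ s, b j ^ 2)) := by
        rw [← mul_sum]
        gcongr
        simpa only [sq_abs] using Real.sum_mul_le_sqrt_mul_sqrt s (|a ·|) (|b ·|)

section HessianOfProduct

variable {E : Type*} [NormedAddCommGroup E] [NormedSpace ℝ E] {g : ℝ → ℝ}

theorem contDiff_mul_comp {n : WithTop ℕ∞} (hg : ContDiff ℝ n g) (L A : E →L[ℝ] ℝ) :
    ContDiff ℝ n fun σ => L σ * g (A σ) :=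
  L.contDiff.mul (hg.comp A.contDiff)

theorem hasFDerivAt_mul_comp (hg : Differentiable ℝ g) (L A : E →L[ℝ] ℝ) (τ : E) :
    HasFDerivAt (fun σ => L σ * g (A σ)) ((L τ * deriv g (A τ)) • A + g (A τ) • L) τ := by
  have := L.hasFDerivAt.mul ((hg (A τ)).hasDerivAt.comp_hasFDerivAt τ A.hasFDerivAt)
  rwa [smul_smul] at this

theorem iteratedFDeriv_two_mul_comp_apply (hg : ContDiff ℝ 2 g) (L A : E →L[ℝ] ℝ)
    (θ : E) (m : Fin 2 → E) :
    iteratedFDeriv ℝ 2 (fun σ => L σ * g (A σ)) θ m =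
      L θ * deriv (deriv g) (A θ) * A (m 0) * A (m 1)
        + deriv g (A θ) * L (m 0) * A (m 1) + deriv g (A θ) * L (m 1) * A (m 0) := by
  have hg1 : Differentiable ℝ g := hg.differentiable two_ne_zero
  have hg2 : Differentiable ℝ (deriv g) :=
    ((contDiff_succ_iff_deriv (n := 1)).mp hg).2.2.differentiable one_ne_zero
  have hD : fderiv ℝ (fun σ => L σ * g (A σ)) =
      fun τ => (L τ * deriv g (A τ)) • A + g (A τ) • L :=
    funext fun τ => (hasFDerivAt_mul_comp hg1 L A τ).fderiv
  have hD2 : HasFDerivAt (fun τ => (L τ * deriv g (A τ)) • A + g (A τ) • L) _ θ :=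
    ((hasFDerivAt_mul_comp hg2 L A θ).smul_const A).fun_add
    ((hg1 (A θ)).hasDerivAt.comp_hasFDerivAt θ A.hasFDerivAt |>.smul_const L)
  rw [iteratedFDeriv_two_apply, hD, hD2.fderiv]
  simp only [_root_.add_apply, ContinuousLinearMap.smulRight_apply, _root_.smul_apply,
    smul_eq_mul]
  ring

end HessianOfProduct

section HessianOfSum

variable {E : Type*} [NormedAddCommGroup E] [NormedSpace ℝ E] {g : ℝ → ℝ}

theorem sqrt_sum_sq_le {ι : Type*} [Fintype ι] {A : ι → E →L[ℝ] ℝ} {Q : ℝ} (hQ : 0 ≤ Q)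
    (hA : ∀ u, ∑ j, A j u ^ 2 ≤ Q * ‖u‖ ^ 2) (u : E) :
    √(∑ j, A j u ^ 2) ≤ √Q * ‖u‖ := by
  rw [← Real.sqrt_sq (norm_nonneg u), ← Real.sqrt_mul hQ]
  exact Real.sqrt_le_sqrt (hA u)

theorem norm_iteratedFDeriv_two_sum_mul_comp_le {ι : Type*} [Fintype ι] {B P Q : ℝ}
    (hg : ContDiff ℝ 2 g) (hg1 : ∀ t, |deriv g t| ≤ B) (hg2 : ∀ t, |deriv (deriv g) t| ≤ B)
    (L A : ι → E →L[ℝ] ℝ) (hL : ∀ u, ∑ j, L j u ^ 2 ≤ ‖u‖ ^ 2)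
    (hQ : 0 ≤ Q) (hA : ∀ u, ∑ j, A j u ^ 2 ≤ Q * ‖u‖ ^ 2)
    (θ : E) (hP : 0 ≤ P) (hθ : ∀ j, |L j θ| ≤ P) :
    ‖iteratedFDeriv ℝ 2 (fun τ => ∑ j, L j τ * g (A j τ)) θ‖ ≤ B * (P * Q + 2 * √Q) := by
  have hB : 0 ≤ B := (abs_nonneg _).trans (hg1 0)
  have hsL : ∀ u, √(∑ j, L j u ^ 2) ≤ ‖u‖ := fun u => by
    simpa using sqrt_sum_sq_le zero_le_one (by simpa using hL) u
  have hsA := sqrt_sum_sq_le hQ hA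
  refine ContinuousMultilinearMap.opNorm_le_bound (by positivity) fun m => ?_
  rw [iteratedFDeriv_fun_sum_apply fun j _ => (contDiff_mul_comp hg (L j) (A j)).contDiffAt,
    _root_.sum_apply, Real.norm_eq_abs, Fin.prod_univ_two]
  simp only [iteratedFDeriv_two_mul_comp_apply hg, sum_add_distrib]
  have hLg2 : ∀ j, |L j θ * deriv (deriv g) (A j θ)| ≤ P * B := fun j => by
    rw [abs_mul]; exact mul_le_mul (hθ j) (hg2 _) (abs_nonneg _) hP
  have hg1' : ∀ j ∈ univ, |deriv g (A j θ)| ≤ B := fun j _ => hg1 _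
  calc _ ≤ _ := abs_add_three _ _ _
    _ ≤ P * B * (√Q * ‖m 0‖ * (√Q * ‖m 1‖)) + B * (‖m 0‖ * (√Q * ‖m 1‖))
          + B * (‖m 1‖ * (√Q * ‖m 0‖)) := by
      gcongr ?_ + ?_ + ?_
      · exact (abs_sum_mul_mul_le_sqrt_mul_sqrt _ (by positivity) (fun j _ => hLg2 j) _ _).trans
          (by gcongr; exacts [hsA _, hsA _])
      · exact (abs_sum_mul_mul_le_sqrt_mul_sqrt _ hB hg1' _ _).trans
          (by gcongr; exacts [hsL _, hsA _])
      · exact (abs_sum_mul_mul_le_sqrt_mul_sqrt _ hB hg1' _ _).trans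
          (by gcongr; exacts [hsL _, hsA _])
    _ = B * (P * Q + 2 * √Q) * (‖m 0‖ * ‖m 1‖) := by
      linear_combination P * B * ‖m 0‖ * ‖m 1‖ * Real.mul_self_sqrt hQ

end HessianOfSum

theorem EuclideanSpace.sum_sq_inl_add_sum_sq_inr {α β : Type*} [Fintype α] [Fintype β]
    (u : EuclideanSpace ℝ (α ⊕ β)) :
    ∑ a, u (Sum.inl a) ^ 2 + ∑ b, u (Sum.inr b) ^ 2 = ‖u‖ ^ 2 := by
  rw [EuclideanSpace.real_norm_sq_eq, Fintype.sum_sum_type]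

theorem sum_sq_apply_mk_le {α β : Type*} [Fintype α] [Fintype β] (f : α × β → ℝ) (b : β) :
    ∑ a, f (a, b) ^ 2 ≤ ∑ p, f p ^ 2 := by
  rw [Fintype.sum_prod_type]
  exact sum_le_sum fun a _ =>
    single_le_sum (f := fun b => f (a, b) ^ 2) (fun _ _ => sq_nonneg _) (mem_univ b)

namespace TwoLayerNet

variable {M k d : ℕ}

abbrev Params (M k d : ℕ) := EuclideanSpace ℝ ((Fin M × Fin k) ⊕ (Fin M × Fin d))

noncomputable def outWeight (i : Fin k) (m : Fin M) : Params M k d →L[ℝ] ℝ :=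
  EuclideanSpace.proj (Sum.inl (m, i))

noncomputable def preactivation (x : Fin d → ℝ) (m : Fin M) : Params M k d →L[ℝ] ℝ :=
  ∑ a, x a • EuclideanSpace.proj (Sum.inr (m, a))

theorem outWeight_apply (i : Fin k) (m : Fin M) (τ : Params M k d) :
    outWeight i m τ = τ (Sum.inl (m, i)) := rfl

theorem preactivation_apply (x : Fin d → ℝ) (m : Fin M) (τ : Params M k d) :
    preactivation x m τ = ∑ a, τ (Sum.inr (m, a)) * x a := by
  simp [preactivation, mul_comm]

theorem sum_outWeight_sq_le (i : Fin k) (u : Params M k d) :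
    ∑ m, outWeight i m u ^ 2 ≤ ‖u‖ ^ 2 := by
  rw [← EuclideanSpace.sum_sq_inl_add_sum_sq_inr]
  exact (sum_sq_apply_mk_le (fun p => u (Sum.inl p)) i).trans
    (le_add_of_nonneg_right (by positivity))

theorem sum_preactivation_sq_le (x : Fin d → ℝ) (u : Params M k d) :
    ∑ m, preactivation x m u ^ 2 ≤ (∑ a, x a ^ 2) * ‖u‖ ^ 2 := by
  calc ∑ m, preactivation x m u ^ 2
      ≤ ∑ m, (∑ a, u (Sum.inr (m, a)) ^ 2) * ∑ a, x a ^ 2 := by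
        simp only [preactivation_apply]
        exact sum_le_sum fun m _ => sum_mul_sq_le_sq_mul_sq _ _ _
    _ = (∑ a, x a ^ 2) * ∑ p, u (Sum.inr p) ^ 2 := by
        rw [← sum_mul, Fintype.sum_prod_type, mul_comm]
    _ ≤ (∑ a, x a ^ 2) * ‖u‖ ^ 2 := by
        rw [← EuclideanSpace.sum_sq_inl_add_sum_sq_inr]
        gcongr
        exact le_add_of_nonneg_left (by positivity)

noncomputable def output (ψ : ℝ → ℝ) (x : Fin d → ℝ) (i : Fin k) (τ : Params M k d) : ℝ :=
  (√M)⁻¹ • ∑ m, outWeight i m τ * ψ (preactivation x m τ)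

theorem norm_iteratedFDeriv_two_output_le {ψ : ℝ → ℝ} {B P Q : ℝ} (hψ : ContDiff ℝ 2 ψ)
    (hψ1 : ∀ t, |deriv ψ t| ≤ B) (hψ2 : ∀ t, |deriv (deriv ψ) t| ≤ B)
    {x : Fin d → ℝ} (hx : ∑ a, x a ^ 2 ≤ Q) (i : Fin k) {θ : Params M k d} (hθ : ‖θ‖ ≤ P) :
    ‖iteratedFDeriv ℝ 2 (output ψ x i) θ‖ ≤ (√M)⁻¹ * (B * (P * Q + 2 * √Q)) := by
  have hHess := norm_iteratedFDeriv_two_sum_mul_comp_le hψ hψ1 hψ2 (outWeight i)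
    (preactivation x) (sum_outWeight_sq_le i) ((by positivity : (0 : ℝ) ≤ _).trans hx)
    (fun u => (sum_preactivation_sq_le x u).trans (by gcongr)) θ ((norm_nonneg θ).trans hθ)
    (fun m => (PiLp.norm_apply_le θ _).trans hθ)
  unfold output
  rw [iteratedFDeriv_const_smul_apply'
    (ContDiff.sum fun m _ => contDiff_mul_comp hψ _ _).contDiffAt, norm_smul,
    Real.norm_of_nonneg (by positivity)]
  gcongr

end TwoLayerNet

theorem stmt12_general (ψ : ℝ → ℝ) (B Bx : ℝ) (hψ : ContDiff ℝ 2 ψ)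
    (hψ1 : ∀ t, |deriv ψ t| ≤ B)
    (hψ2 : ∀ t, |deriv (deriv ψ) t| ≤ B) (d k : ℕ) :
    ∃ C : ℝ, 0 < C ∧ ∀ (M : ℕ), 0 < M →
      ∀ (x : Fin d → ℝ), (∀ a, |x a| ≤ Bx) →
      ∀ (i : Fin k) (θ₀ : EuclideanSpace ℝ ((Fin M × Fin k) ⊕ (Fin M × Fin d)))
        (R : ℝ), 1 ≤ R → ‖θ₀‖ ≤ R →
      ∀ θ : EuclideanSpace ℝ ((Fin M × Fin k) ⊕ (Fin M × Fin d)), ‖θ - θ₀‖ ≤ R →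
        ‖iteratedFDeriv ℝ 2
            (fun τ : EuclideanSpace ℝ ((Fin M × Fin k) ⊕ (Fin M × Fin d)) =>
              (Real.sqrt M)⁻¹ *
                ∑ m : Fin M, τ (Sum.inl (m, i)) * ψ (∑ a : Fin d, τ (Sum.inr (m, a)) * x a))
            θ‖
          ≤ C * R / Real.sqrt M := by
  have hB : 0 ≤ B := (abs_nonneg _).trans (hψ1 0)
  set Q : ℝ := d * Bx ^ 2
  refine ⟨B * (2 * Q + 2 * √Q) + 1, by positivity, ?_⟩
  intro M _ x hx i θ₀ R hR hθ₀ θ hθ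
  have hxQ : ∑ a, x a ^ 2 ≤ Q := by
    have hxa : ∀ a, x a ^ 2 ≤ Bx ^ 2 := fun a => sq_le_sq' (abs_le.mp (hx a)).1 (abs_le.mp (hx a)).2
    simpa using sum_le_sum fun a (_ : a ∈ univ) => hxa a
  have hθR : ‖θ‖ ≤ 2 * R := by
    linarith [norm_le_norm_sub_add θ θ₀]
  have hfun : (fun τ : TwoLayerNet.Params M k d => (√M)⁻¹ *
      ∑ m : Fin M, τ (Sum.inl (m, i)) * ψ (∑ a : Fin d, τ (Sum.inr (m, a)) * x a)) =
      TwoLayerNet.output ψ x i := by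
    ext τ
    simp [TwoLayerNet.output, TwoLayerNet.outWeight_apply, TwoLayerNet.preactivation_apply]
  rw [hfun]
  calc _ ≤ (√M)⁻¹ * (B * (2 * R * Q + 2 * √Q)) :=
        TwoLayerNet.norm_iteratedFDeriv_two_output_le hψ hψ1 hψ2 hxQ i hθR
    _ ≤ (√M)⁻¹ * ((B * (2 * Q + 2 * √Q) + 1) * R) := by
        refine mul_le_mul_of_nonneg_left ?_ (by positivity)
        nlinarith [mul_nonneg (mul_nonneg hB (Real.sqrt_nonneg Q)) (sub_nonneg.mpr hR)]
    _ = _ := by rw [div_eq_inv_mul]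

/-- Hessian bound for a two-layer network `f_i(θ) = M^{-1/2} ∑_m w_{m,i} ψ(v_mᵀ x)`
with smooth bounded activation: the operator norm of the Hessian in the parameters `θ`
is `O(R/√M)` uniformly over the ball `‖θ - θ₀‖ ≤ R` (with `‖θ₀‖ ≤ R`, `R ≥ 1`). -/
theorem stmt12 (ψ : ℝ → ℝ) (B Bx : ℝ) (hψ : ContDiff ℝ 2 ψ)
    (hψ0 : ∀ t, |ψ t| ≤ B) (hψ1 : ∀ t, |deriv ψ t| ≤ B)
    (hψ2 : ∀ t, |deriv (deriv ψ) t| ≤ B) (d k : ℕ) :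
    ∃ C : ℝ, 0 < C ∧ ∀ (M : ℕ), 0 < M →
      ∀ (x : Fin d → ℝ), (∀ a, |x a| ≤ Bx) →
      ∀ (i : Fin k) (θ₀ : EuclideanSpace ℝ ((Fin M × Fin k) ⊕ (Fin M × Fin d)))
        (R : ℝ), 1 ≤ R → ‖θ₀‖ ≤ R →
      ∀ θ : EuclideanSpace ℝ ((Fin M × Fin k) ⊕ (Fin M × Fin d)), ‖θ - θ₀‖ ≤ R →
        ‖iteratedFDeriv ℝ 2
            (fun τ : EuclideanSpace ℝ ((Fin M × Fin k) ⊕ (Fin M × Fin d)) =>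
              (Real.sqrt M)⁻¹ *
                ∑ m : Fin M, τ (Sum.inl (m, i)) * ψ (∑ a : Fin d, τ (Sum.inr (m, a)) * x a))
            θ‖
          ≤ C * R / Real.sqrt M :=
  stmt12_general ψ B Bx hψ hψ1 hψ2 d k
end
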